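/- For every integer l ≥ 0, the polynomial c_{1+q²+⋯+q^{2(l−1)}} (the index being (q^{2l} − 1)/(q² − 1), equal to 0 when l = 0) has degree exactly l in t and its coefficient of t^l equals (−1)^l; that is, c_{(q^{2l}−1)/(q²−1)} = (−1)^l t^l + (terms of degree < l in t with coefficients in 𝔽_q[θ]). -/

import Mathlib

open Polynomial

/-!
Write `E l = 1 + q² + ⋯ + q^{2(l-1)} = (q^{2l} - 1)/(q² - 1)`, so that `E (l+1) = 1 + q² E l`.
By strong induction on `s`, `deg_t c_s ≤ l` whenever `s < E (l+1)`: in the `γ`-sum the index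
`j ≤ s/q` stays below `E (l+1)`, while in the `δ`-sum `δ_0 = 0` forces `j q² < s`, hence
`j < E l`, and the factor `t - θ^q` adds one to the degree. For `s = E (l+1)` the coefficient of `t^{l+1}` only sees the term
`i = 1, j = E l` of the `δ`-sum, which contributes `δ_1 · (-1)^l = (-1)^{l+1}`.
-/

/-- The `𝔽_q`-algebra endomorphism of `R = 𝔽_q[t,θ]` (realised as `(𝔽_q[θ])[t]`, with `t` the
outer variable `X` and `θ` the inner variable `C X`) sending `t ↦ t^{q^a}` and `θ ↦ θ^{q^b}`. -/
noncomputable def subst (F : Type) [Field F] (q a b : ℕ) :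
    Polynomial (Polynomial F) →+* Polynomial (Polynomial F) :=
  eval₂RingHom (C.comp (Polynomial.aeval ((X : Polynomial F) ^ q ^ b)).toRingHom)
    ((X : Polynomial (Polynomial F)) ^ q ^ a)

theorem subst_zero_eq_map (F : Type) [Field F] (q b : ℕ) (P : Polynomial (Polynomial F)) :
    subst F q 0 b P = P.map (aeval ((X : Polynomial F) ^ q ^ b)).toRingHom := by
  rw [subst, pow_zero, pow_one, map, coe_eval₂RingHom]

/-- The `v^s`-coefficient of `(∑ a_i v^i) · (∑ c_j(t, θ^{q^b}) v^{j q^b})`. -/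
noncomputable def twistedConv (F : Type) [Field F] (q b : ℕ) (a : ℕ → Polynomial F)
    (c : ℕ → Polynomial (Polynomial F)) (s : ℕ) : Polynomial (Polynomial F) :=
  ∑ ij ∈ Finset.range (s + 1) ×ˢ Finset.range (s + 1),
    if ij.1 + ij.2 * q ^ b = s then C (a ij.1) * subst F q 0 b (c ij.2) else 0

section twistedConv

variable {F : Type} [Field F] {q b : ℕ} {a : ℕ → Polynomial F}
  {c : ℕ → Polynomial (Polynomial F)} {s : ℕ}

theorem natDegree_twistedConv_le {n : ℕ}
    (h : ∀ i j, i + j * q ^ b = s → a i ≠ 0 → (c j).natDegree ≤ n) :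
    (twistedConv F q b a c s).natDegree ≤ n := by
  refine natDegree_sum_le_of_forall_le _ _ fun ij _ => ?_
  split_ifs with hij
  · by_cases ha : a ij.1 = 0
    · simp [ha]
    · rw [subst_zero_eq_map]
      exact (natDegree_C_mul_le _ _).trans (natDegree_map_le.trans (h _ _ hij ha))
  · simp

theorem coeff_twistedConv (k : ℕ) :
    (twistedConv F q b a c s).coeff k =
      ∑ ij ∈ Finset.range (s + 1) ×ˢ Finset.range (s + 1),
        if ij.1 + ij.2 * q ^ b = s then
          a ij.1 * aeval ((X : Polynomial F) ^ q ^ b) ((c ij.2).coeff k) else 0 := by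
  rw [twistedConv, finsetSum_coeff]
  refine Finset.sum_congr rfl fun ij _ => ?_
  split_ifs
  · rw [coeff_C_mul, subst_zero_eq_map, coeff_map]
    rfl
  · rfl

theorem coeff_twistedConv_eq_single (hq : 0 < q) {k i₀ j₀ : ℕ} (h₀ : i₀ + j₀ * q ^ b = s)
    (h : ∀ i j, i + j * q ^ b = s → (i, j) ≠ (i₀, j₀) → a i = 0 ∨ (c j).coeff k = 0) :
    (twistedConv F q b a c s).coeff k =
      a i₀ * aeval ((X : Polynomial F) ^ q ^ b) ((c j₀).coeff k) := by
  have hmem : (i₀, j₀) ∈ Finset.range (s + 1) ×ˢ Finset.range (s + 1) := by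
    have : j₀ ≤ j₀ * q ^ b := Nat.le_mul_of_pos_right _ (by positivity)
    simp only [Finset.mem_product, Finset.mem_range]
    omega
  rw [coeff_twistedConv, Finset.sum_eq_single_of_mem _ hmem, if_pos h₀]
  rintro ⟨i, j⟩ - hne
  split_ifs with hij
  · rcases h i j hij hne with hi | hj
    · rw [hi, zero_mul]
    · rw [hj, map_zero, mul_zero]
  · rfl

end twistedConv

def extremalIndex (q l : ℕ) : ℕ := ∑ m ∈ Finset.range l, q ^ (2 * m)

@[simp]
theorem extremalIndex_zero (q : ℕ) : extremalIndex q 0 = 0 := rfl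

theorem extremalIndex_succ (q l : ℕ) : extremalIndex q (l + 1) = 1 + q ^ 2 * extremalIndex q l := by
  rw [extremalIndex, extremalIndex, Finset.sum_range_succ', Finset.mul_sum, mul_zero, pow_zero,
    add_comm]
  exact congrArg _ (Finset.sum_congr rfl fun m _ => by ring)

theorem extremalIndex_lt_succ {q : ℕ} (hq : 0 < q) (l : ℕ) :
    extremalIndex q l < extremalIndex q (l + 1) := by
  rw [extremalIndex, extremalIndex, Finset.sum_range_succ]
  exact Nat.lt_add_of_pos_right (by positivity)

theorem lt_of_add_mul_eq {q i j s : ℕ} (hq : 2 ≤ q) (hs : 1 ≤ s) (h : i + j * q = s) : j < s := by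
  nlinarith

section Recursion

variable {F : Type} [Field F] {q : ℕ} {γ δ : ℕ → Polynomial F} {c : ℕ → Polynomial (Polynomial F)}

theorem natDegree_le_of_lt_extremalIndex (hq : 2 ≤ q) (hc0 : c 0 = 1) (hδ0 : δ 0 = 0)
    (hc : ∀ s, 1 ≤ s → c s = twistedConv F q 1 γ c s + (X - C (X ^ q)) * twistedConv F q 2 δ c s)
    {s l : ℕ} (hs : s < extremalIndex q (l + 1)) : (c s).natDegree ≤ l := by
  induction s using Nat.strong_induction_on generalizing l with
  | _ s ih =>
  obtain rfl | hs1 := Nat.eq_zero_or_pos s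
  · simp [hc0]
  rcases l with _ | l
  · simp [extremalIndex_succ] at hs
    omega
  rw [hc s hs1]
  refine natDegree_add_le_of_degree_le ?_ ?_
  · refine natDegree_twistedConv_le fun i j hij _ => ?_
    have hjs := lt_of_add_mul_eq hq hs1 (by rwa [pow_one] at hij)
    exact ih j hjs (hjs.trans hs)
  · refine (natDegree_mul_le.trans (add_le_add (natDegree_X_sub_C_le _) ?_)).trans_eq (add_comm _ _)
    refine natDegree_twistedConv_le fun i j hij hi => ?_
    have hi1 : 1 ≤ i := Nat.one_le_iff_ne_zero.2 fun h => hi (h ▸ hδ0)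
    rw [extremalIndex_succ] at hs
    have hjl : j < extremalIndex q (l + 1) := by nlinarith
    have hjq : j ≤ j * q ^ 2 := Nat.le_mul_of_pos_right _ (by positivity)
    exact ih j (by omega) hjl

theorem coeff_eq_zero_of_lt_extremalIndex (hq : 2 ≤ q) (hc0 : c 0 = 1) (hδ0 : δ 0 = 0)
    (hc : ∀ s, 1 ≤ s → c s = twistedConv F q 1 γ c s + (X - C (X ^ q)) * twistedConv F q 2 δ c s)
    {s l : ℕ} (hs : s < extremalIndex q l) : (c s).coeff l = 0 := by
  rcases l with _ | l
  · exact absurd hs (Nat.not_lt_zero _)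
  exact coeff_eq_zero_of_natDegree_lt
    ((natDegree_le_of_lt_extremalIndex hq hc0 hδ0 hc hs).trans_lt l.lt_succ_self)

theorem coeff_extremalIndex (hq : 2 ≤ q) (hc0 : c 0 = 1) (hδ0 : δ 0 = 0) (hδ1 : δ 1 = -1)
    (hc : ∀ s, 1 ≤ s → c s = twistedConv F q 1 γ c s + (X - C (X ^ q)) * twistedConv F q 2 δ c s)
    (l : ℕ) : (c (extremalIndex q l)).coeff l = (-1) ^ l := by
  induction l with
  | zero => simp [hc0]
  | succ l ih =>
  set s := extremalIndex q (l + 1)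
  have hs : s = 1 + q ^ 2 * extremalIndex q l := extremalIndex_succ q l
  have hγ_part : (twistedConv F q 1 γ c s).coeff (l + 1) = 0 := by
    refine coeff_eq_zero_of_natDegree_lt (Nat.lt_succ_of_le (natDegree_twistedConv_le ?_))
    intro i j hij _
    exact natDegree_le_of_lt_extremalIndex hq hc0 hδ0 hc
      (lt_of_add_mul_eq hq (by omega) (by rwa [pow_one] at hij))
  have hδ_part_top : (twistedConv F q 2 δ c s).coeff (l + 1) = 0 := by
    refine coeff_eq_zero_of_natDegree_lt (Nat.lt_succ_of_le (natDegree_twistedConv_le ?_))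
    intro i j hij hi
    have hi1 : 1 ≤ i := Nat.one_le_iff_ne_zero.2 fun h => hi (h ▸ hδ0)
    have hjl : j ≤ extremalIndex q l := by nlinarith
    exact natDegree_le_of_lt_extremalIndex hq hc0 hδ0 hc
      (hjl.trans_lt (extremalIndex_lt_succ (by omega) l))
  have hδ_part : (twistedConv F q 2 δ c s).coeff l = (-1) ^ (l + 1) := by
    rw [coeff_twistedConv_eq_single (i₀ := 1) (j₀ := extremalIndex q l) (by omega)
      (by rw [hs, mul_comm]), hδ1, ih]
    · simp [pow_succ]
    intro i j hij hne
    rcases Nat.eq_zero_or_pos i with rfl | hi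
    · exact Or.inl hδ0
    refine Or.inr (coeff_eq_zero_of_lt_extremalIndex hq hc0 hδ0 hc ?_)
    have hjl : j ≤ extremalIndex q l := by nlinarith
    refine lt_of_le_of_ne hjl fun hj => hne ?_
    subst hj
    exact Prod.ext (by nlinarith) rfl
  rw [hc s (by omega), coeff_add, mul_comm, coeff_mul_X_sub_C, hγ_part, hδ_part, hδ_part_top]
  ring

end Recursion

theorem coeff_extremal_index_general
    {p : ℕ} (hp : p.Prime) {e : ℕ} (he : 1 ≤ e) {q : ℕ} (hq : q = p ^ e)
    (F : Type) [Field F]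
    (γ δ : ℕ → Polynomial F) (hδ0 : δ 0 = 0) (hδ1 : δ 1 = -1)
    (c : ℕ → Polynomial (Polynomial F)) (hc0 : c 0 = 1)
    (hc : ∀ s, 1 ≤ s → c s =
      (∑ ij ∈ Finset.range (s + 1) ×ˢ Finset.range (s + 1),
        if ij.1 + ij.2 * q = s then C (γ ij.1) * subst F q 0 1 (c ij.2) else 0) +
      (X - C (X ^ q)) *
      (∑ ij ∈ Finset.range (s + 1) ×ˢ Finset.range (s + 1),
        if ij.1 + ij.2 * q ^ 2 = s then C (δ ij.1) * subst F q 0 2 (c ij.2) else 0)) :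
    ∀ l : ℕ, (c (∑ m ∈ Finset.range l, q ^ (2 * m))).natDegree = l ∧
      (c (∑ m ∈ Finset.range l, q ^ (2 * m))).coeff l = (-1) ^ l := by
  have hq2 : 2 ≤ q := hq ▸ hp.two_le.trans (Nat.le_self_pow (by omega) p)
  have hc' : ∀ s, 1 ≤ s →
      c s = twistedConv F q 1 γ c s + (X - C (X ^ q)) * twistedConv F q 2 δ c s := by
    simpa only [twistedConv, pow_one] using hc
  intro l
  have hcoeff := coeff_extremalIndex hq2 hc0 hδ0 hδ1 hc' l
  refine ⟨natDegree_eq_of_le_of_coeff_ne_zero ?_ ?_, hcoeff⟩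
  · exact natDegree_le_of_lt_extremalIndex hq2 hc0 hδ0 hc' (extremalIndex_lt_succ (by omega) l)
  · exact hcoeff ▸ pow_ne_zero _ (neg_ne_zero.2 one_ne_zero)

/-- Let `c : ℕ → R` satisfy `c 0 = 1` and, for `s ≥ 1`, the recursion
`c s = Σ_{i+jq=s} γ_i · c_j(t,θ^q) + (t − θ^q) · Σ_{i+jq²=s} δ_i · c_j(t,θ^{q²})`, where
`γ, δ : ℕ → 𝔽_q[θ]` with `γ_0 = 1`, `δ_0 = 0`, `δ_1 = −1`. Then for every `l ≥ 0`, the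
polynomial `c_{1+q²+⋯+q^{2(l−1)}}` has degree exactly `l` in `t` and its coefficient of
`t^l` equals `(−1)^l`. -/
theorem coeff_extremal_index
    {p : ℕ} (hp : p.Prime) {e : ℕ} (he : 1 ≤ e) {q : ℕ} (hq : q = p ^ e)
    (F : Type) [Field F] [Fintype F] (hF : Fintype.card F = q)
    (γ δ : ℕ → Polynomial F) (hγ0 : γ 0 = 1) (hδ0 : δ 0 = 0) (hδ1 : δ 1 = -1)
    (c : ℕ → Polynomial (Polynomial F)) (hc0 : c 0 = 1)
    (hc : ∀ s, 1 ≤ s → c s =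
      (∑ ij ∈ Finset.range (s + 1) ×ˢ Finset.range (s + 1),
        if ij.1 + ij.2 * q = s then C (γ ij.1) * subst F q 0 1 (c ij.2) else 0) +
      (X - C (X ^ q)) *
      (∑ ij ∈ Finset.range (s + 1) ×ˢ Finset.range (s + 1),
        if ij.1 + ij.2 * q ^ 2 = s then C (δ ij.1) * subst F q 0 2 (c ij.2) else 0)) :
    ∀ l : ℕ, (c (∑ m ∈ Finset.range l, q ^ (2 * m))).natDegree = l ∧
      (c (∑ m ∈ Finset.range l, q ^ (2 * m))).coeff l = (-1) ^ l :=
  coeff_extremal_index_general hp he hq F γ δ hδ0 hδ1 c hc0 hc
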